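/- Let α : ℂ → ℂ be analytic at 0 with α(0) = 0 and α'(0) ≠ 0, and let k ≥ 1 be a natural number. Then there exists a map β : ℂᵏ → ℂᵏ (i.e. β : (Fin k → ℂ) → (Fin k → ℂ)), analytic at 0, with β(0) = 0 and with invertible (Fréchet) derivative at 0, such that α(∑_{j=1}^{k} v_j²) = ∑_{j=1}^{k} (β_j(v))² for all v in some neighbourhood of 0 in ℂᵏ, where β_j denotes the j-th component of β. -/
import Mathlib

open Complex

/-- if `α : ℂ → ℂ` is analytic at `0` with `α 0 = 0`, `α' 0 ≠ 0`, and `k ≥ 1`,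
then there is `β : ℂᵏ → ℂᵏ`, analytic at `0`, with `β 0 = 0` and invertible derivative at `0`,
such that `α (∑ j, v j ^ 2) = ∑ j, (β v j) ^ 2` for all `v` near `0`. -/
theorem square_root_of_base_change_quadratic_form
    (α : ℂ → ℂ) (hα : AnalyticAt ℂ α 0) (hα0 : α 0 = 0) (hα' : deriv α 0 ≠ 0)
    (k : ℕ) (hk : 1 ≤ k) :
    ∃ β : (Fin k → ℂ) → (Fin k → ℂ),
      AnalyticAt ℂ β 0 ∧ β 0 = 0 ∧
      (∃ e : (Fin k → ℂ) ≃L[ℂ] (Fin k → ℂ),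
        fderiv ℂ β 0 = (e : (Fin k → ℂ) →L[ℂ] (Fin k → ℂ))) ∧
      ∀ᶠ v in nhds (0 : Fin k → ℂ), α (∑ j, v j ^ 2) = ∑ j, (β v j) ^ 2 := by
  classical
  set g : ℂ → ℂ := dslope α 0 with hgdef
  -- g is analytic at 0
  obtain ⟨p, hp⟩ := hα
  have hgA : AnalyticAt ℂ g 0 := ⟨p.fslope, hp.has_fpower_series_dslope_fslope⟩
  have hg0 : g 0 = deriv α 0 := dslope_same α 0
  have hαg : ∀ z, α z = z * g z := by
    intro z
    rcases eq_or_ne z 0 with rfl | hz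
    · simp [hα0]
    · rw [hgdef, dslope_of_ne _ hz, slope_def_field]
      field_simp
      rw [hα0]; ring
  set c : ℂ := deriv α 0 with hcdef
  set c₀ : ℂ := c ^ ((2 : ℂ)⁻¹) with hc₀def
  have hc₀ : c₀ ^ 2 = c := by
    rw [hc₀def, show ((2:ℂ))⁻¹ = (((2:ℕ):ℂ))⁻¹ by norm_num]
    exact Complex.cpow_nat_inv_pow c two_ne_zero
  have hc₀ne : c₀ ≠ 0 := by
    intro h
    apply hα'
    rw [← hc₀, h]; ring
  set h : ℂ → ℂ := fun z => c₀ * Complex.exp (Complex.log (g z / c) / 2) with hhdef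
  have hgc : AnalyticAt ℂ (fun z => g z / c) 0 := hgA.div analyticAt_const hα'
  have hlog : AnalyticAt ℂ (fun z => Complex.log (g z / c)) 0 := by
    apply hgc.clog
    show g 0 / c ∈ slitPlane
    rw [hg0, div_self hα']
    exact Complex.one_mem_slitPlane
  have hhA : AnalyticAt ℂ h 0 := by
    apply analyticAt_const.mul
    exact (hlog.div analyticAt_const (by norm_num)).cexp
  -- h z ^ 2 = g z when g z ≠ 0
  have hsq : ∀ z, g z ≠ 0 → h z ^ 2 = g z := by
    intro z hz
    have h1 : g z / c ≠ 0 := div_ne_zero hz hα'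
    rw [hhdef]
    simp only
    rw [mul_pow, ← Complex.exp_nat_mul]
    have : (2 : ℂ) * (Complex.log (g z / c) / 2) = Complex.log (g z / c) := by ring
    rw [show ((2:ℕ):ℂ) = (2:ℂ) by norm_num, this, Complex.exp_log h1, hc₀]
    field_simp
  have hh0 : h 0 ^ 2 = c := by rw [hsq 0 (by rw [hg0]; exact hα')]; exact hg0
  have hh0ne : h 0 ≠ 0 := by
    intro h0; apply hα'; rw [← hh0, h0]; ring
  set q : (Fin k → ℂ) → ℂ := fun v => ∑ j, v j ^ 2 with hqdef
  have hqA : AnalyticAt ℂ q 0 := by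
    apply Finset.analyticAt_fun_sum
    intro j _
    exact (ContinuousLinearMap.proj j : (Fin k → ℂ) →L[ℂ] ℂ).analyticAt 0 |>.pow 2
  have hq0 : q 0 = 0 := by simp [hqdef]
  have hhq : AnalyticAt ℂ (fun v => h (q v)) 0 :=
    (show AnalyticAt ℂ h (q 0) by rw [hq0]; exact hhA).comp hqA
  refine ⟨fun v => h (q v) • v, ?_, ?_, ?_, ?_⟩
  · exact hhq.smul analyticAt_id
  · simp
  · -- fderiv
    have hd : HasFDerivAt (fun v : Fin k → ℂ => h (q v) • v)
        (h 0 • ContinuousLinearMap.id ℂ (Fin k → ℂ)) 0 := by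
      have h1 := hhq.differentiableAt.hasFDerivAt
      have h2 : HasFDerivAt (fun v : Fin k → ℂ => v) (ContinuousLinearMap.id ℂ _) 0 :=
        hasFDerivAt_id 0
      have h3 := h1.smul h2
      have heq : h (q 0) • ContinuousLinearMap.id ℂ (Fin k → ℂ) +
          (fderiv ℂ (fun v => h (q v)) 0).smulRight ((0 : Fin k → ℂ)) =
          h 0 • ContinuousLinearMap.id ℂ (Fin k → ℂ) := by
        ext v j
        simp [hq0]
      rw [heq] at h3
      exact h3
    refine ⟨(LinearEquiv.smulOfNeZero ℂ _ (h 0) hh0ne).toContinuousLinearEquiv, ?_⟩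
    rw [hd.fderiv]
    ext v j
    simp [LinearEquiv.smulOfNeZero, LinearEquiv.smulOfUnit]
  · -- eventual equality
    have hcont : ContinuousAt q 0 := hqA.continuousAt
    have hgcont : ContinuousAt g 0 := hgA.continuousAt
    have hne : ∀ᶠ v in nhds (0 : Fin k → ℂ), g (q v) ≠ 0 := by
      have h0 : ∀ᶠ z in nhds (q 0), g z ≠ 0 := by
        rw [hq0]
        exact hgcont.eventually_ne (by rw [hg0]; exact hα')
      exact hcont h0
    filter_upwards [hne] with v hv
    have : ∑ j, (h (q v) • v) j ^ 2 = h (q v) ^ 2 * q v := by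
      simp only [Pi.smul_apply, smul_eq_mul, mul_pow, hqdef]
      rw [Finset.mul_sum]
    rw [this, hsq _ hv, hαg (q v)]
    ring
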